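/- Let q be prime and let m_1 be the leading monomial (in graded lex order) of a nonzero f ∈ P_q(n) of degree exactly d. Consider the linear system, in the coefficients α_m of a generic P = ∑_{deg(m)≤e} α_m m ∈ P_q(n,e), asserting that the coefficient of m* in f·P vanishes for every m* ∈ U_{s,e}(m_1). Writing these equations in a matrix with rows indexed by m* = m * m_1 (m ∈ D_{s,e}(m_1)) ordered by increasing m, and columns indexed by monomials m' of degree ≤ e ordered increasingly, the square submatrix on columns in D_{s,e}(m_1) is upper triangular with nonzero diagonal entries; in particular the system has rank at least |D_{s,e}(m_1)| = |U_{s,e}(m_1)|. -/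

import Mathlib

open MvPolynomial

/-- Total degree of a monomial (exponent vector). -/
def mdeg {n : ℕ} (m : Fin n →₀ ℕ) : ℕ := ∑ i, m i

/-- A polynomial is reduced if all individual degrees are at most `q - 1`
(the canonical representative in `P_q(n) = F_q[X]/(X_i^q - X_i)`). -/
def RMReduced {n q : ℕ} (p : MvPolynomial (Fin n) (ZMod q)) : Prop :=
  ∀ m ∈ p.support, ∀ i, m i ≤ q - 1

/-- Membership in `P_q(n,e)`: reduced and total degree at most `e`. -/
def InP (q n e : ℕ) (p : MvPolynomial (Fin n) (ZMod q)) : Prop :=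
  RMReduced p ∧ p.totalDegree ≤ e

/-- `h` is the product of `f` and `g` in `P_q(n)`: it is the reduced polynomial
representing the pointwise product of the functions represented by `f` and `g`. -/
def RedProd {n q : ℕ} (f g h : MvPolynomial (Fin n) (ZMod q)) : Prop :=
  RMReduced h ∧ ∀ x : Fin n → ZMod q, eval x h = eval x f * eval x g

/-- Graded lexicographic order: `m < m'` iff `deg m < deg m'`, or degrees are
equal and at the first differing coordinate `m` has the smaller exponent. -/
def GLexLt {n : ℕ} (m m' : Fin n →₀ ℕ) : Prop :=
  mdeg m < mdeg m' ∨
    (mdeg m = mdeg m' ∧ ∃ j : Fin n, (∀ i, i < j → m i = m' i) ∧ m j < m' j)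

/-- `U_t(m)`: monomials of degree `deg m + t` dominating `m` coordinatewise,
with all exponents at most `q - 1`. -/
def Uset (q : ℕ) {n : ℕ} (m : Fin n →₀ ℕ) (t : ℕ) : Set (Fin n →₀ ℕ) :=
  {m' | mdeg m' = mdeg m + t ∧ ∀ i, m i ≤ m' i ∧ m' i ≤ q - 1}

/-- `U_{s,e}(m) = ⋃_{s ≤ t ≤ e} U_t(m)`. -/
def Usetse (q : ℕ) {n : ℕ} (m : Fin n →₀ ℕ) (s e : ℕ) : Set (Fin n →₀ ℕ) :=
  {m' | ∃ t, s ≤ t ∧ t ≤ e ∧ m' ∈ Uset q m t}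

/-- `D_{s,e}(m)`: monomials of degree between `s` and `e` disjoint from `m`. -/
def Dsetse (q : ℕ) {n : ℕ} (m : Fin n →₀ ℕ) (s e : ℕ) : Set (Fin n →₀ ℕ) :=
  {m' | s ≤ mdeg m' ∧ mdeg m' ≤ e ∧ ∀ i, m' i + m i < q}

/-- Reduction of an exponent using `X^q = X` over `F_q`. -/
def redExp (q e : ℕ) : ℕ := if e ≤ q - 1 then e else (e - 1) % (q - 1) + 1

/-- Reduction of a monomial modulo `(X_i^q - X_i)_i`. -/
noncomputable def redMon (q : ℕ) {n : ℕ} (m : Fin n →₀ ℕ) : Fin n →₀ ℕ :=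
  Finsupp.equivFunOnFinite.symm fun i => redExp q (m i)

/-- The coefficient with which `α_{m'}` appears in the linear equation asserting
that the coefficient of `m*` in the reduced product `f·P` vanishes: namely the
coefficient of `m*` in the reduced representative of `f · X^{m'}`. -/
noncomputable def eqnEntry {q n : ℕ} (f : MvPolynomial (Fin n) (ZMod q))
    (mstar m' : Fin n →₀ ℕ) : ZMod q :=
  ∑ mj ∈ f.support, if redMon q (m' + mj) = mstar then f.coeff mj else 0


section Helpers

lemma mdeg_add {n : ℕ} (a b : Fin n →₀ ℕ) : mdeg (a + b) = mdeg a + mdeg b := by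
  simp [mdeg, Finsupp.add_apply, Finset.sum_add_distrib]

lemma redExp_le (q e : ℕ) : redExp q e ≤ e := by
  unfold redExp; split
  · exact le_rfl
  · have := Nat.mod_le (e - 1) (q - 1); omega

lemma redMon_apply (q : ℕ) {n : ℕ} (m : Fin n →₀ ℕ) (i : Fin n) :
    redMon q m i = redExp q (m i) := rfl

lemma mdeg_redMon_le (q : ℕ) {n : ℕ} (m : Fin n →₀ ℕ) : mdeg (redMon q m) ≤ mdeg m :=
  Finset.sum_le_sum fun i _ => by rw [redMon_apply]; exact redExp_le q (m i)

lemma redMon_eq_of_mdeg_eq (q : ℕ) {n : ℕ} (m : Fin n →₀ ℕ)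
    (h : mdeg (redMon q m) = mdeg m) : redMon q m = m := by
  have := (Finset.sum_eq_sum_iff_of_le (s := Finset.univ)
    (fun i _ => by rw [redMon_apply]; exact redExp_le q (m i))).1 h
  exact Finsupp.ext fun i => this i (Finset.mem_univ i)

lemma glex_irrefl {n : ℕ} (m : Fin n →₀ ℕ) : ¬ GLexLt m m := by
  rintro (h | ⟨_, j, _, hj⟩)
  · exact lt_irrefl _ h
  · exact lt_irrefl _ hj

lemma lex_trans {n : ℕ} {a b c : Fin n →₀ ℕ}
    (h1 : ∃ j : Fin n, (∀ i, i < j → a i = b i) ∧ a j < b j)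
    (h2 : ∃ j : Fin n, (∀ i, i < j → b i = c i) ∧ b j < c j) :
    ∃ j : Fin n, (∀ i, i < j → a i = c i) ∧ a j < c j := by
  obtain ⟨N₁, lt_N₁, hab⟩ := h1
  obtain ⟨N₂, lt_N₂, hbc⟩ := h2
  rcases lt_trichotomy N₁ N₂ with (H | rfl | H)
  · exact ⟨N₁, fun j hj => (lt_N₁ _ hj).trans (lt_N₂ _ (hj.trans H)), lt_N₂ _ H ▸ hab⟩
  · exact ⟨N₁, fun j hj => (lt_N₁ _ hj).trans (lt_N₂ _ hj), hab.trans hbc⟩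
  · exact ⟨N₂, fun j hj => (lt_N₁ _ (hj.trans H)).trans (lt_N₂ _ hj), (lt_N₁ _ H).symm ▸ hbc⟩

lemma glex_trans {n : ℕ} {a b c : Fin n →₀ ℕ} (h1 : GLexLt a b) (h2 : GLexLt b c) :
    GLexLt a c := by
  rcases h1 with h1 | ⟨e1, l1⟩ <;> rcases h2 with h2 | ⟨e2, l2⟩
  · exact Or.inl (h1.trans h2)
  · exact Or.inl (e2 ▸ h1)
  · exact Or.inl (e1 ▸ h2)
  · exact Or.inr ⟨e1.trans e2, lex_trans l1 l2⟩

lemma glex_add_right {n : ℕ} {a b : Fin n →₀ ℕ} (c : Fin n →₀ ℕ) (h : GLexLt a b) :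
    GLexLt (a + c) (b + c) := by
  rcases h with h | ⟨e, j, hji, hj⟩
  · exact Or.inl (by rw [mdeg_add, mdeg_add]; omega)
  · refine Or.inr ⟨by rw [mdeg_add, mdeg_add, e], j, fun i hi => ?_, ?_⟩
    · simp [Finsupp.add_apply, hji i hi]
    · simp only [Finsupp.add_apply]; omega

lemma glex_add_left {n : ℕ} {a b : Fin n →₀ ℕ} (c : Fin n →₀ ℕ) (h : GLexLt a b) :
    GLexLt (c + a) (c + b) := by
  rw [add_comm c a, add_comm c b]; exact glex_add_right c h

lemma glex_redMon {q n : ℕ} (x : Fin n →₀ ℕ) :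
    GLexLt (redMon q x) x ∨ redMon q x = x := by
  rcases lt_or_eq_of_le (mdeg_redMon_le q x) with h | h
  · exact Or.inl (Or.inl h)
  · exact Or.inr (redMon_eq_of_mdeg_eq q x h)

lemma lexlt_iff' {n : ℕ} (x y : Fin n → ℕ) :
    Pi.Lex (· < ·) (· < ·) x y ↔ ∃ j, (∀ i, i < j → x i = y i) ∧ x j < y j := Iff.rfl

lemma glex_trichotomy {n : ℕ} (m m' : Fin n →₀ ℕ) (h : m ≠ m') :
    GLexLt m m' ∨ GLexLt m' m := by
  rcases Nat.lt_trichotomy (mdeg m) (mdeg m') with h1 | h1 | h1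
  · exact Or.inl (Or.inl h1)
  · have hne : (⇑m : Fin n → ℕ) ≠ ⇑m' := fun hc => h (Finsupp.ext fun i => congrFun hc i)
    have := (Pi.isTrichotomous_lex (· < ·) (fun {_ : Fin n} => ((· < ·) : ℕ → ℕ → Prop))
      (wellFounded_lt)).trichotomous (⇑m) (⇑m')
    rcases (or_iff_not_imp_left.2 fun hl => or_iff_not_imp_right.2 fun hr => this hl hr) with hl | he | hr
    · exact Or.inl (Or.inr ⟨h1, (lexlt_iff' _ _).1 hl⟩)
    · exact absurd he hne
    · exact Or.inr (Or.inr ⟨h1.symm, (lexlt_iff' _ _).1 hr⟩)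
  · exact Or.inr (Or.inl h1)

variable {q n : ℕ} {f : MvPolynomial (Fin n) (ZMod q)} {m1 : Fin n →₀ ℕ}

lemma diag_entry (hm1 : m1 ∈ f.support)
    (hlead : ∀ m ∈ f.support, m ≠ m1 → GLexLt m m1)
    {m : Fin n →₀ ℕ} (hdisj : ∀ i, m i + m1 i < q) :
    eqnEntry f (m + m1) m = f.coeff m1 := by
  have hred1 : redMon q (m + m1) = m + m1 := by
    refine Finsupp.ext fun i => ?_
    rw [redMon_apply]
    have := hdisj i
    simp only [Finsupp.add_apply]
    unfold redExp
    rw [if_pos (by omega)]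
  have key : ∀ mj ∈ f.support, (redMon q (m + mj) = m + m1 ↔ mj = m1) := by
    intro mj hmj
    constructor
    · intro h
      by_contra hne
      rcases hlead mj hmj hne with hd | ⟨hd, j, _, hj⟩
      · have h1 := mdeg_redMon_le q (m + mj)
        rw [h, mdeg_add, mdeg_add] at h1
        omega
      · have h1 : mdeg (redMon q (m + mj)) = mdeg (m + mj) := by
          rw [h, mdeg_add, mdeg_add, hd]
        have h2 := redMon_eq_of_mdeg_eq q _ h1
        rw [h] at h2
        exact hne (add_left_cancel h2.symm)
    · rintro rfl; exact hred1
  rw [eqnEntry]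
  rw [Finset.sum_congr rfl fun mj hmj => if_congr (key mj hmj) rfl rfl,
    Finset.sum_ite_eq' f.support m1 (fun mj => f.coeff mj), if_pos hm1]

lemma offdiag_entry (hlead : ∀ m ∈ f.support, m ≠ m1 → GLexLt m m1)
    {m m' : Fin n →₀ ℕ} (hlt : GLexLt m' m) :
    eqnEntry f (m + m1) m' = 0 := by
  rw [eqnEntry]
  refine Finset.sum_eq_zero fun mj hmj => ?_
  rw [if_neg]
  intro h
  have h3 : GLexLt (m' + m1) (m + m1) := glex_add_right m1 hlt
  have h2 : GLexLt (m' + mj) (m' + m1) ∨ m' + mj = m' + m1 := by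
    by_cases hne : mj = m1
    · exact Or.inr (by rw [hne])
    · exact Or.inl (glex_add_left m' (hlead mj hmj hne))
  have h1 := glex_redMon (q := q) (m' + mj)
  rw [h] at h1
  have h12 : GLexLt (m + m1) (m' + m1) ∨ m + m1 = m' + m1 := by
    rcases h1 with h1 | h1 <;> rcases h2 with h2 | h2
    · exact Or.inl (glex_trans h1 h2)
    · exact Or.inl (h2 ▸ h1)
    · exact Or.inl (h1.symm ▸ h2)
    · exact Or.inr (h1.trans h2)
  rcases h12 with h12 | h12
  · exact glex_irrefl _ (glex_trans h12 h3)
  · exact glex_irrefl _ (h12.symm ▸ h3)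

lemma exists_glex_min {n : ℕ} (t : Finset (Fin n →₀ ℕ)) (ht : t.Nonempty) :
    ∃ a ∈ t, ∀ b ∈ t, b ≠ a → GLexLt a b := by
  classical
  induction t using Finset.induction with
  | empty => exact absurd ht (by simp)
  | @insert x u hx ih =>
    rcases u.eq_empty_or_nonempty with rfl | hu
    · exact ⟨x, by simp, fun b hb hne => absurd (by simpa using hb) hne⟩
    · obtain ⟨a, ha, hmin⟩ := ih hu
      rcases eq_or_ne x a with rfl | hxa
      · exact absurd ha hx
      rcases glex_trichotomy x a hxa with hlt | hlt
      · refine ⟨x, Finset.mem_insert_self _ _, fun b hb hne => ?_⟩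
        rcases Finset.mem_insert.1 hb with rfl | hb
        · exact absurd rfl hne
        · rcases eq_or_ne b a with rfl | hba
          · exact hlt
          · exact glex_trans hlt (hmin b hb hba)
      · refine ⟨a, Finset.mem_insert_of_mem ha, fun b hb hne => ?_⟩
        rcases Finset.mem_insert.1 hb with rfl | hb
        · exact hlt
        · exact hmin b hb hne

end Helpers

theorem stmt13 (q n d e s : ℕ) (hq : q.Prime) (hse : s ≤ e)
    (f : MvPolynomial (Fin n) (ZMod q)) (hf0 : f ≠ 0) (hred : RMReduced f)
    (hdeg : f.totalDegree = d)
    (m1 : Fin n →₀ ℕ) (hm1 : m1 ∈ f.support)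
    (hlead : ∀ m ∈ f.support, m ≠ m1 → GLexLt m m1) :
    -- the diagonal entries are nonzero
    (∀ m ∈ Dsetse q m1 s e, eqnEntry f (m + m1) m ≠ 0) ∧
    -- the submatrix is upper triangular: entries below the diagonal vanish
    (∀ m ∈ Dsetse q m1 s e, ∀ m' : Fin n →₀ ℕ, mdeg m' ≤ e →
      GLexLt m' m → eqnEntry f (m + m1) m' = 0) ∧
    -- |D_{s,e}(m_1)| = |U_{s,e}(m_1)|
    (Dsetse q m1 s e).ncard = (Usetse q m1 s e).ncard ∧
    -- in particular, the rows indexed by `D_{s,e}(m_1)` are linearly independent,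
    -- so the system has rank at least `|D_{s,e}(m_1)|`
    LinearIndependent (ZMod q)
      (fun m : {m : Fin n →₀ ℕ // m ∈ Dsetse q m1 s e} =>
        (fun m' : Fin n →₀ ℕ =>
          if mdeg m' ≤ e then eqnEntry f ((m : Fin n →₀ ℕ) + m1) m' else 0)) := by
  classical
  haveI := Fact.mk hq
  have hq2 : 2 ≤ q := hq.two_le
  have part1 : ∀ m ∈ Dsetse q m1 s e, eqnEntry f (m + m1) m ≠ 0 := by
    rintro m ⟨_, _, hdisj⟩
    rw [diag_entry hm1 hlead hdisj]
    exact MvPolynomial.mem_support_iff.1 hm1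
  have part2 : ∀ m ∈ Dsetse q m1 s e, ∀ m' : Fin n →₀ ℕ, mdeg m' ≤ e →
      GLexLt m' m → eqnEntry f (m + m1) m' = 0 :=
    fun m _ m' _ hlt => offdiag_entry hlead hlt
  have himg : Usetse q m1 s e = (fun m => m + m1) '' Dsetse q m1 s e := by
    ext m'
    constructor
    · rintro ⟨t, hst, hte, hdeg', hdom⟩
      have hsub : (m' - m1) + m1 = m' := by
        refine Finsupp.ext fun i => ?_
        have := (hdom i).1
        simp only [Finsupp.add_apply, Finsupp.tsub_apply]
        omega
      have hmd : mdeg (m' - m1) = t := by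
        have := mdeg_add (m' - m1) m1
        rw [hsub, hdeg'] at this
        omega
      refine ⟨m' - m1, ⟨by omega, by omega, fun i => ?_⟩, hsub⟩
      have h1 := (hdom i).1
      have h2 := (hdom i).2
      simp only [Finsupp.tsub_apply]
      omega
    · rintro ⟨m, ⟨hs, he', hdisj⟩, rfl⟩
      refine ⟨mdeg m, hs, he', by rw [mdeg_add, add_comm], fun i => ?_⟩
      have := hdisj i
      simp only [Finsupp.add_apply]
      omega
  have part3 : (Dsetse q m1 s e).ncard = (Usetse q m1 s e).ncard := by
    rw [himg, Set.ncard_image_of_injective _ (add_left_injective m1)]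
  refine ⟨part1, part2, part3, ?_⟩
  rw [linearIndependent_iff']
  intro t c hsum i hit
  by_contra hci
  set u := t.filter (fun j => c j ≠ 0) with hu
  have hune : (u.image Subtype.val).Nonempty :=
    ⟨i.1, Finset.mem_image.2 ⟨i, Finset.mem_filter.2 ⟨hit, hci⟩, rfl⟩⟩
  obtain ⟨a, ha, hmin⟩ := exists_glex_min _ hune
  obtain ⟨i0, hi0u, rfl⟩ := Finset.mem_image.1 ha
  have hi0t := (Finset.mem_filter.1 hi0u).1
  have hci0 := (Finset.mem_filter.1 hi0u).2
  obtain ⟨hs0, he0, hdisj0⟩ := i0.2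
  have h0 := congrFun hsum i0.1
  simp only [Finset.sum_apply, Pi.smul_apply, smul_eq_mul, Pi.zero_apply] at h0
  rw [Finset.sum_eq_single i0 (fun j hjt hji => ?_) (fun h => absurd hi0t h)] at h0
  · rw [if_pos he0, diag_entry hm1 hlead hdisj0] at h0
    rcases mul_eq_zero.1 h0 with hc | hc
    · exact hci0 hc
    · exact MvPolynomial.mem_support_iff.1 hm1 hc
  · by_cases hcj : c j = 0
    · rw [hcj, zero_mul]
    · have hju : (j : Fin n →₀ ℕ) ∈ u.image Subtype.val :=
        Finset.mem_image.2 ⟨j, Finset.mem_filter.2 ⟨hjt, hcj⟩, rfl⟩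
      have hne : (j : Fin n →₀ ℕ) ≠ i0.1 := fun hc => hji (Subtype.ext hc)
      have hlt := hmin _ hju hne
      rw [if_pos he0, offdiag_entry hlead hlt, mul_zero]
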